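/- Let t(d) = ln(d/(d_min - 0.5)) if d ≥ d_min, else 0, for integer d_min ≥ 1. For a finite family of integer degrees (d_v)_{v∈V}, define T_disc = Σ_v t(d_v). If (d'_v) differs from (d_v) in at most two indices, and at each of those indices the degree changes by exactly 1, then |Σ_v t(d_v) − Σ_v t(d'_v)| ≤ 2·ln((d_min+1)/d_min). -/

import Mathlib

/-! The score `t` is monotone, so a unit change of one degree changes it by
`t (a + 1) - t a ≥ 0`. Above the threshold this is `log ((a + 1) / a)`, largest at `a = d_min`;
at the threshold it is `log (d_min / (d_min - 1/2))`, which is at most `log ((d_min + 1) / d_min)`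
because `d_min² ≤ (d_min + 1)(d_min - 1/2)` for `d_min ≥ 1`. At most two indices change. -/

open Finset Real

theorem abs_sum_sub_sum_le_card_mul {ι : Type*} [Fintype ι] {f g : ι → ℝ} (S : Finset ι)
    (hout : ∀ i ∉ S, f i = g i) {L : ℝ} (hS : ∀ i ∈ S, |f i - g i| ≤ L) :
    |∑ i, f i - ∑ i, g i| ≤ #S * L := by
  have hsum : ∑ i, f i - ∑ i, g i = ∑ i ∈ S, (f i - g i) := by
    rw [← sum_sub_distrib]
    exact (sum_subset (subset_univ S) fun i _ hi => by rw [hout i hi, sub_self]).symm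
  calc |∑ i, f i - ∑ i, g i| ≤ ∑ i ∈ S, |f i - g i| := hsum ▸ abs_sum_le_sum_abs _ _
    _ ≤ ∑ _i ∈ S, L := sum_le_sum hS
    _ = #S * L := by rw [sum_const, nsmul_eq_mul]

theorem log_succ_div_self_nonneg {x : ℝ} (hx : 0 < x) : 0 ≤ log ((x + 1) / x) :=
  log_nonneg ((one_le_div hx).2 (by linarith))

theorem log_succ_div_self_le {m a : ℝ} (hm : 0 < m) (hma : m ≤ a) :
    log ((a + 1) / a) ≤ log ((m + 1) / m) := by
  have ha : 0 < a := hm.trans_le hma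
  apply log_le_log (by positivity)
  rw [div_le_div_iff₀ ha hm]
  linarith

theorem log_div_sub_half_le {m : ℝ} (hm : 1 ≤ m) :
    log (m / (m - 0.5)) ≤ log ((m + 1) / m) := by
  apply log_le_log (div_pos (by linarith) (by linarith))
  rw [div_le_div_iff₀ (by linarith) (by linarith)]
  nlinarith

/-- The per-vertex score `t` of the statement, with threshold `m = d_min`. -/
noncomputable def logDegreeScore (m d : ℕ) : ℝ :=
  if m ≤ d then log ((d : ℝ) / ((m : ℝ) - 0.5)) else 0

theorem logDegreeScore_succ_sub_of_le {m a : ℕ} (hm : 1 ≤ m) (hma : m ≤ a) :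
    logDegreeScore m (a + 1) - logDegreeScore m a = log (((a : ℝ) + 1) / a) := by
  have hm' : (1 : ℝ) ≤ m := by exact_mod_cast hm
  have ha : (m : ℝ) ≤ a := by exact_mod_cast hma
  rw [logDegreeScore, logDegreeScore, if_pos (by omega), if_pos hma]
  push_cast
  rw [log_div (by linarith) (by norm_num; linarith), log_div (by linarith) (by norm_num; linarith),
    log_div (by linarith) (by linarith)]
  ring

theorem logDegreeScore_succ_sub_mem_Icc {m : ℕ} (hm : 1 ≤ m) (a : ℕ) :
    logDegreeScore m (a + 1) - logDegreeScore m a ∈ Set.Icc 0 (log (((m : ℝ) + 1) / m)) := by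
  have hm' : (1 : ℝ) ≤ m := by exact_mod_cast hm
  have hL := log_succ_div_self_nonneg (by linarith : (0 : ℝ) < m)
  rcases lt_trichotomy (a + 1) m with hlt | heq | hgt
  · rw [logDegreeScore, logDegreeScore, if_neg (by omega), if_neg (by omega), sub_self]
    exact ⟨le_rfl, hL⟩
  · subst heq
    rw [logDegreeScore, logDegreeScore, if_pos le_rfl, if_neg (by omega), sub_zero]
    refine ⟨log_nonneg ((one_le_div (by norm_num; linarith)).2 (by norm_num)), ?_⟩
    exact_mod_cast log_div_sub_half_le hm'
  · have hma : m ≤ a := by omega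
    have ha : (m : ℝ) ≤ a := by exact_mod_cast hma
    rw [logDegreeScore_succ_sub_of_le hm hma]
    exact ⟨log_succ_div_self_nonneg (by linarith), log_succ_div_self_le (by linarith) ha⟩

theorem abs_logDegreeScore_succ_sub_le {m : ℕ} (hm : 1 ≤ m) (a : ℕ) :
    |logDegreeScore m (a + 1) - logDegreeScore m a| ≤ log (((m : ℝ) + 1) / m) := by
  obtain ⟨hnonneg, hle⟩ := logDegreeScore_succ_sub_mem_Icc hm a
  rwa [abs_of_nonneg hnonneg]

theorem stmt_4 {V : Type*} [Fintype V] (d_min : ℕ) (h : 1 ≤ d_min)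
    (t : ℕ → ℝ)
    (ht : ∀ d : ℕ, t d = if d_min ≤ d then Real.log ((d : ℝ) / ((d_min : ℝ) - 0.5)) else 0)
    (d d' : V → ℕ) (S : Finset V) (hS : S.card ≤ 2)
    (hout : ∀ v ∉ S, d v = d' v)
    (hin : ∀ v ∈ S, d' v = d v + 1 ∨ d v = d' v + 1) :
    |(∑ v : V, t (d v)) - ∑ v : V, t (d' v)| ≤
      2 * Real.log (((d_min : ℝ) + 1) / (d_min : ℝ)) := by
  obtain rfl : t = logDegreeScore d_min := funext ht
  have hstep : ∀ v ∈ S, |logDegreeScore d_min (d v) - logDegreeScore d_min (d' v)| ≤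
      log (((d_min : ℝ) + 1) / d_min) := fun v hv => by
    rcases hin v hv with hv' | hv'
    · rw [hv', abs_sub_comm]; exact abs_logDegreeScore_succ_sub_le h _
    · rw [hv']; exact abs_logDegreeScore_succ_sub_le h _
  refine (abs_sum_sub_sum_le_card_mul S (fun v hv => congrArg _ (hout v hv)) hstep).trans ?_
  exact mul_le_mul_of_nonneg_right (by exact_mod_cast hS)
    (log_succ_div_self_nonneg (by exact_mod_cast h))
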